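/- arXiv:1904.12996 — 3 statements merged into one kernel-verified Lean document; each statement's English description precedes it below -/
import Mathlib

section
/- Define integer-valued degree functions by s(i,0) = 2^i − 2 and w(i,0) = 2^(i−1) − 1 for i ≥ 1, and s(i,j) = 2^j·(2^i − 1) − 1 and w(i,j) = 2^(j−1)·(2^i − 1) for i ≥ 1, j ≥ 1, and set r(i,j) = s(i,j)/(s(i,j) − w(i,j)) as a rational number whenever s(i,j) − w(i,j) ≠ 0. Then for every pair (i,j) with i ≥ 1, j ≥ 0 and (i,j) ∉ {(1,0),(1,1),(1,2),(2,1)}, one has s(i,j) − w(i,j) > 0 and 11/6 ≤ r(i,j) ≤ 7/3. Moreover, for the exceptional pairs, r(1,2) = 3 and r(2,1) = 5/2. -/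
/-- The stem of the motivic May spectral sequence generator `h_{i,j}`. -/
def mayStem (i j : ℕ) : ℤ :=
  if j = 0 then 2 ^ i - 2 else 2 ^ j * (2 ^ i - 1) - 1

/-- The motivic weight of the motivic May spectral sequence generator `h_{i,j}`. -/
def mayWeight (i j : ℕ) : ℤ :=
  if j = 0 then 2 ^ (i - 1) - 1 else 2 ^ (j - 1) * (2 ^ i - 1)

/-- The ratio of stem to Milnor–Witt stem of `h_{i,j}`. -/
noncomputable def mayRatio (i j : ℕ) : ℚ :=
  (mayStem i j : ℚ) / ((mayStem i j : ℚ) - (mayWeight i j : ℚ))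

theorem may_ratio_bounds :
    (∀ i j : ℕ, 1 ≤ i →
      (i, j) ∉ ({(1, 0), (1, 1), (1, 2), (2, 1)} : Set (ℕ × ℕ)) →
      0 < mayStem i j - mayWeight i j ∧
        (11 / 6 : ℚ) ≤ mayRatio i j ∧ mayRatio i j ≤ 7 / 3) ∧
    mayRatio 1 2 = 3 ∧ mayRatio 2 1 = 5 / 2 := by
  refine ⟨?_, ?_, ?_⟩
  · intro i j hi hmem
    simp only [Set.mem_insert_iff, Set.mem_singleton_iff, Prod.mk.injEq, not_or] at hmem
    obtain ⟨h10, h11, h12, h21⟩ := hmem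
    rcases j with _ | k
    · -- j = 0
      have hi2 : 2 ≤ i := by omega
      obtain ⟨n, rfl⟩ : ∃ n, i = n + 1 := ⟨i - 1, by omega⟩
      have hn : 1 ≤ n := by omega
      have h2n : (2:ℤ) ≤ 2 ^ n := by
        calc (2:ℤ) = 2 ^ 1 := by norm_num
        _ ≤ 2 ^ n := pow_le_pow_right₀ (by norm_num) hn
      have hpow : (2:ℤ) ^ (n + 1) = 2 ^ n * 2 := pow_succ 2 n
      constructor
      · have hs0 : mayStem (n+1) 0 = 2 ^ (n+1) - 2 := by norm_num [mayStem]
        have hw0 : mayWeight (n+1) 0 = 2 ^ n - 1 := by norm_num [mayWeight]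
        rw [hs0, hw0]; linarith
      · have hratio : mayRatio (n+1) 0 = 2 := by
          have hs0 : mayStem (n+1) 0 = 2 ^ (n+1) - 2 := by norm_num [mayStem]
          have hw0 : mayWeight (n+1) 0 = 2 ^ n - 1 := by norm_num [mayWeight]
          unfold mayRatio
          rw [hs0, hw0]
          push_cast
          have hpq : (2:ℚ) ^ (n + 1) = 2 ^ n * 2 := pow_succ 2 n
          have h2q : (2:ℚ) ≤ 2 ^ n := by
            calc (2:ℚ) = 2 ^ 1 := by norm_num
            _ ≤ 2 ^ n := pow_le_pow_right₀ (by norm_num) hn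
          have hd : (2:ℚ) ^ (n+1) - 2 - (2 ^ n - 1) ≠ 0 := by
            rw [hpq]; intro h; linarith
          rw [div_eq_iff hd, hpq]; ring
        rw [hratio]; norm_num
    · -- j = k + 1
      set m : ℤ := 2 ^ k * (2 ^ i - 1) with hm_def
      have h1k : (1:ℤ) ≤ 2 ^ k := by calc (1:ℤ) = 2 ^ 0 := by norm_num
        _ ≤ 2 ^ k := pow_le_pow_right₀ (by norm_num) (Nat.zero_le k)
      have hm4 : 4 ≤ m := by
        rcases Nat.lt_or_ge i 3 with h | h
        · interval_cases i
          · -- i = 1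
            have hk2 : 2 ≤ k := by omega
            have : (4:ℤ) ≤ 2 ^ k := by
              calc (4:ℤ) = 2 ^ 2 := by norm_num
              _ ≤ 2 ^ k := pow_le_pow_right₀ (by norm_num) hk2
            simp only [hm_def]; norm_num; linarith
          · -- i = 2
            have hk1 : 1 ≤ k := by omega
            have : (2:ℤ) ≤ 2 ^ k := by
              calc (2:ℤ) = 2 ^ 1 := by norm_num
              _ ≤ 2 ^ k := pow_le_pow_right₀ (by norm_num) hk1
            simp only [hm_def]; norm_num; linarith
        · have h8 : (8:ℤ) ≤ 2 ^ i := by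
            calc (8:ℤ) = 2 ^ 3 := by norm_num
            _ ≤ 2 ^ i := pow_le_pow_right₀ (by norm_num) h
          have : (1:ℤ) * 7 ≤ 2 ^ k * (2 ^ i - 1) :=
            mul_le_mul h1k (by linarith) (by norm_num) (by positivity)
          linarith
      have hs : mayStem i (k+1) = 2 * m - 1 := by
        simp only [mayStem, if_neg (Nat.succ_ne_zero k), hm_def, pow_succ]; ring
      have hw : mayWeight i (k+1) = m := by
        simp only [mayWeight, if_neg (Nat.succ_ne_zero k), Nat.add_sub_cancel, hm_def]
      refine ⟨by rw [hs, hw]; omega, ?_, ?_⟩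
      · unfold mayRatio
        rw [hs, hw]
        push_cast
        have hM : (4:ℚ) ≤ (m:ℚ) := by exact_mod_cast hm4
        rw [le_div_iff₀ (by linarith)]
        linarith
      · unfold mayRatio
        rw [hs, hw]
        push_cast
        have hM : (4:ℚ) ≤ (m:ℚ) := by exact_mod_cast hm4
        rw [div_le_iff₀ (by linarith)]
        linarith
  · norm_num [mayRatio, mayStem, mayWeight]
  · norm_num [mayRatio, mayStem, mayWeight]
end

section
/- For every natural number n ≥ 0, define h_n : {1,2,3,…} → ℕ ∪ {∞} by h_n(i) = (n+1) ∸ i (truncated subtraction), and define k_n : ℕ → ℕ ∪ {∞} by k_n(i) = ∞ for 0 ≤ i ≤ n and k_n(i) = 0 for i ≥ n+1. Then the pair (h_n, k_n) is free: for all i ≥ 0, every natural number m with m ≥ k_n(i), and every natural number j ≤ m, one has k_n(i+m) = 0 and h_n(i+j) ≤ m − j. -/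
/-- The profile function `h_n : {1,2,...} → ℕ ∪ {∞}`, `h_n(i) = (n+1) ∸ i`
(defining the ideal `I(n)` of the `C₂`-equivariant dual Steenrod algebra). -/
def profileH (n i : ℕ) : ℕ∞ := ((n + 1 - i : ℕ) : ℕ∞)

/-- The profile function `k_n : ℕ → ℕ ∪ {∞}`, with `k_n(i) = ∞` for `i ≤ n` and
`k_n(i) = 0` for `i ≥ n+1`. -/
def profileK (n i : ℕ) : ℕ∞ := if i ≤ n then ⊤ else 0

theorem profile_In_free (n : ℕ) :
    ∀ i m j : ℕ, profileK n i ≤ (m : ℕ∞) → j ≤ m →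
      profileK n (i + m) = 0 ∧ profileH n (i + j) ≤ ((m - j : ℕ) : ℕ∞) := by
  intro i m j hk hj
  have hi : ¬ i ≤ n := by
    intro h
    simp [profileK, h] at hk
  constructor
  · simp [profileK]
    omega
  · simp only [profileH, Nat.cast_le]
    omega
end

section
/- Let F₂ be the field with two elements and let R = F₂[τ, ρ] be the polynomial ring in two variables. Consider the ring B = R[u, v, v⁻¹]/(u² + ρu + τv), i.e. the localization at v of the quotient of the polynomial ring R[u,v] by the ideal generated by u² + ρu + τv. Then B is a free R-module, and the images of the monomials {v^j : j ∈ ℤ} ∪ {u·v^j : j ∈ ℤ} form an R-module basis of B. -/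
noncomputable section

open MvPolynomial

/-- The coefficient ring `R = F₂[τ, ρ]`. -/
abbrev CoeffR := MvPolynomial (Fin 2) (ZMod 2)

/-- The class `τ ∈ R`. -/
def τR : CoeffR := X 0

/-- The class `ρ ∈ R`. -/
def ρR : CoeffR := X 1

/-- The polynomial ring `R[u, v]`. -/
abbrev PolyS := MvPolynomial (Fin 2) CoeffR

/-- The class `u`. -/
def uS : PolyS := X 0

/-- The class `v`. -/
def vS : PolyS := X 1

/-- The ideal generated by `u² + ρu + τv`. -/
def relIdeal : Ideal PolyS := Ideal.span {uS ^ 2 + C ρR * uS + C τR * vS}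

/-- The quotient ring `A = R[u,v]/(u² + ρu + τv)`. -/
abbrev QuotA := PolyS ⧸ relIdeal

/-- Given an invertible element `vu` of `B` (which will be the image of `v` in the
localization `B = A[v⁻¹]`), the family of monomials `v^j` (indexed by `Sum.inl j`) and
`u·v^j` (indexed by `Sum.inr j`), for `j ∈ ℤ`. -/
def laurentFam (B : Type) [CommRing B] [Algebra QuotA B] (vu : Bˣ) : ℤ ⊕ ℤ → B
  | Sum.inl j => ((vu ^ j : Bˣ) : B)
  | Sum.inr j => @algebraMap QuotA B inferInstance inferInstance _ (Ideal.Quotient.mk relIdeal uS) * ((vu ^ j : Bˣ) : B)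

namespace LocFreeAux

open LaurentPolynomial

abbrev LL := LaurentPolynomial CoeffR
abbrev PP := Polynomial CoeffR
instance : CommRing PP := Polynomial.commRing

def e2 : PolyS ≃ₐ[CoeffR] Polynomial PP :=
  (MvPolynomial.finSuccEquiv CoeffR 1).trans
    (Polynomial.mapAlgEquiv ((MvPolynomial.finSuccEquiv CoeffR 0).trans
      (Polynomial.mapAlgEquiv (MvPolynomial.isEmptyAlgEquiv CoeffR (Fin 0)))))

lemma e2_u : e2 uS = Polynomial.X := by
  have h1 : (MvPolynomial.finSuccEquiv CoeffR 1) (MvPolynomial.X 0) = Polynomial.X :=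
    MvPolynomial.finSuccEquiv_X_zero
  rw [e2, AlgEquiv.trans_apply, uS, h1]
  simp only [Polynomial.coe_mapAlgEquiv, Polynomial.map_X]

lemma e2_v : e2 vS = Polynomial.C Polynomial.X := by
  have h0 : (vS : PolyS) = MvPolynomial.X (Fin.succ 0) := rfl
  have h1 : (MvPolynomial.finSuccEquiv CoeffR 1) (MvPolynomial.X (Fin.succ 0)) = Polynomial.C (MvPolynomial.X 0) :=
    MvPolynomial.finSuccEquiv_X_succ
  have h2 : (MvPolynomial.finSuccEquiv CoeffR 0) (MvPolynomial.X 0) = Polynomial.X :=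
    MvPolynomial.finSuccEquiv_X_zero
  rw [e2, AlgEquiv.trans_apply, h0, h1]
  simp only [Polynomial.coe_mapAlgEquiv, Polynomial.map_C]
  congr 1
  rw [RingHom.coe_coe, AlgEquiv.trans_apply, h2]
  simp only [Polynomial.coe_mapAlgEquiv, Polynomial.map_X]

lemma e2_C (r : CoeffR) : e2 (MvPolynomial.C r) = Polynomial.C (Polynomial.C r) := by
  have h1 : (MvPolynomial.C r : PolyS) = algebraMap CoeffR PolyS r := rfl
  rw [h1, AlgEquiv.commutes, Polynomial.algebraMap_apply, Polynomial.algebraMap_apply]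
  simp

def fP : Polynomial PP := Polynomial.X ^ 2 + Polynomial.C (Polynomial.C ρR) * Polynomial.X
    + Polynomial.C (Polynomial.C τR * Polynomial.X)

lemma e2_rel : e2 (uS ^ 2 + MvPolynomial.C ρR * uS + MvPolynomial.C τR * vS) = fP := by
  rw [map_add, map_add, map_mul, map_mul, map_pow, e2_u, e2_C, e2_C, e2_v, fP, map_mul]

lemma fP_monic : fP.Monic := by unfold fP; monicity!

lemma fP_natDegree : fP.natDegree = 2 := by unfold fP; compute_degree!

lemma fP_degree : fP.degree = 2 := by unfold fP; compute_degree!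

end LocFreeAux

namespace LocFreeAux
open LaurentPolynomial

def gL : Polynomial LL := fP.map Polynomial.toLaurent

lemma gL_monic : gL.Monic := fP_monic.map _
lemma gL_natDegree : gL.natDegree = 2 := by
  rw [gL, fP_monic.natDegree_map, fP_natDegree]
lemma gL_degree : gL.degree = 2 := by
  rw [gL, fP_monic.degree_map, fP_degree]

def eQ : QuotA ≃+* AdjoinRoot fP :=
  Ideal.quotientEquiv relIdeal (Ideal.span {fP} : Ideal (Polynomial PP)) (e2 : PolyS ≃+* Polynomial PP) (by
    rw [relIdeal, Ideal.map_span, Set.image_singleton]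
    have h : (↑(e2 : PolyS ≃+* Polynomial PP) : PolyS →+* Polynomial PP)
        (uS ^ 2 + MvPolynomial.C ρR * uS + MvPolynomial.C τR * vS) = fP := e2_rel
    rw [h])

abbrev MM := AdjoinRoot gL

lemma hroot0 : Polynomial.eval₂ ((algebraMap LL MM).comp Polynomial.toLaurent)
    (AdjoinRoot.root gL) fP = 0 := by
  rw [← Polynomial.eval₂_map, ← gL, AdjoinRoot.algebraMap_eq]
  exact AdjoinRoot.eval₂_root gL

def liftM : AdjoinRoot fP →+* MM :=
  AdjoinRoot.lift ((algebraMap LL MM).comp Polynomial.toLaurent) (AdjoinRoot.root gL) hroot0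

def ψ : QuotA →+* MM := liftM.comp (eQ : QuotA →+* AdjoinRoot fP)

lemma ψ_mk (p : PolyS) : ψ (Ideal.Quotient.mk relIdeal p) =
    Polynomial.eval₂ ((algebraMap LL MM).comp Polynomial.toLaurent) (AdjoinRoot.root gL)
      (e2 p) := by
  have h : eQ (Ideal.Quotient.mk relIdeal p) =
      AdjoinRoot.mk fP ((e2 : PolyS ≃+* Polynomial PP) p) := by
    rw [eQ]; exact Ideal.quotientEquiv_mk _ _ _ _ p
  show liftM (eQ (Ideal.Quotient.mk relIdeal p)) = _
  rw [h]
  exact AdjoinRoot.lift_mk _ _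

lemma ψ_symm_mk (q : Polynomial PP) : ψ (eQ.symm (AdjoinRoot.mk fP q)) =
    AdjoinRoot.mk gL (q.map Polynomial.toLaurent) := by
  show liftM (eQ (eQ.symm (AdjoinRoot.mk fP q))) = AdjoinRoot.mk gL (q.map Polynomial.toLaurent)
  rw [RingEquiv.apply_symm_apply]
  calc liftM (AdjoinRoot.mk fP q)
      = Polynomial.eval₂ ((algebraMap LL MM).comp Polynomial.toLaurent)
        (AdjoinRoot.root gL) q := AdjoinRoot.lift_mk _ _
    _ = Polynomial.eval₂ (algebraMap LL MM) (AdjoinRoot.root gL)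
        (q.map Polynomial.toLaurent) := (Polynomial.eval₂_map _ _ _).symm
    _ = Polynomial.aeval (AdjoinRoot.root gL) (q.map Polynomial.toLaurent) :=
        (Polynomial.aeval_def _ _).symm
    _ = AdjoinRoot.mk gL (q.map Polynomial.toLaurent) := AdjoinRoot.aeval_eq _

lemma ψ_v : ψ (Ideal.Quotient.mk relIdeal vS) = algebraMap LL MM (T 1) := by
  rw [ψ_mk, e2_v]
  simp [Polynomial.toLaurent_X]

lemma ψ_u : ψ (Ideal.Quotient.mk relIdeal uS) = AdjoinRoot.root gL := by
  rw [ψ_mk, e2_u]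
  simp

instance : Algebra QuotA MM := ψ.toAlgebra

lemma algebraMap_QuotA_MM : @algebraMap QuotA MM inferInstance inferInstance _ = ψ := rfl

instance : IsScalarTower CoeffR QuotA MM := IsScalarTower.of_algebraMap_eq fun r => by
  have h1 : algebraMap CoeffR QuotA r = Ideal.Quotient.mk relIdeal (MvPolynomial.C r) := rfl
  rw [algebraMap_QuotA_MM, h1, ψ_mk, e2_C]
  simp [Polynomial.toLaurent_C]
  rw [IsScalarTower.algebraMap_apply CoeffR LL MM, AdjoinRoot.algebraMap_eq]
  congr 1

end LocFreeAux

namespace LocFreeAux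
open LaurentPolynomial

lemma clear_denom (q : Polynomial LL) :
    ∃ (n : ℕ) (p : Polynomial PP),
      p.map Polynomial.toLaurent = q * Polynomial.C (T (n : ℤ)) := by
  induction q using Polynomial.induction_on' with
  | add q₁ q₂ ih₁ ih₂ =>
    obtain ⟨n₁, p₁, h₁⟩ := ih₁
    obtain ⟨n₂, p₂, h₂⟩ := ih₂
    refine ⟨n₁ + n₂, p₁ * Polynomial.C (Polynomial.X ^ n₂) + p₂ * Polynomial.C (Polynomial.X ^ n₁), ?_⟩
    have hX : ∀ m : ℕ, (Polynomial.C (Polynomial.X ^ m) : Polynomial PP).map Polynomial.toLaurent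
        = Polynomial.C (T (m : ℤ)) := by
      intro m
      rw [Polynomial.map_C, map_pow, Polynomial.toLaurent_X, T_pow]
      norm_num
    have hC : (Polynomial.C (T (n₁ : ℤ)) * Polynomial.C (T (n₂ : ℤ)) : Polynomial LL)
        = Polynomial.C (T ((n₁ + n₂ : ℕ) : ℤ)) := by
      rw [← Polynomial.C_mul, ← T_add]
      norm_num
    rw [Polynomial.map_add, Polynomial.map_mul, Polynomial.map_mul, hX n₂, hX n₁, h₁, h₂]
    calc q₁ * Polynomial.C (T (n₁ : ℤ)) * Polynomial.C (T (n₂ : ℤ))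
        + q₂ * Polynomial.C (T (n₂ : ℤ)) * Polynomial.C (T (n₁ : ℤ))
        = (q₁ + q₂) * (Polynomial.C (T (n₁ : ℤ)) * Polynomial.C (T (n₂ : ℤ))) := by ring
      _ = (q₁ + q₂) * Polynomial.C (T ((n₁ + n₂ : ℕ) : ℤ)) := by rw [hC]
  | monomial i a =>
    obtain ⟨n, a', ha⟩ := LaurentPolynomial.exists_T_pow a
    refine ⟨n, Polynomial.C a' * Polynomial.X ^ i, ?_⟩
    rw [Polynomial.map_mul, Polynomial.map_C, Polynomial.map_pow, Polynomial.map_X, ha,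
      Polynomial.C_mul, ← Polynomial.C_mul_X_pow_eq_monomial]
    ring

end LocFreeAux

namespace LocFreeAux
open LaurentPolynomial

lemma liftM_mk (q : Polynomial PP) :
    liftM (AdjoinRoot.mk fP q) = AdjoinRoot.mk gL (q.map Polynomial.toLaurent) := by
  calc liftM (AdjoinRoot.mk fP q)
      = Polynomial.eval₂ ((algebraMap LL MM).comp Polynomial.toLaurent)
        (AdjoinRoot.root gL) q := AdjoinRoot.lift_mk _ _
    _ = Polynomial.eval₂ (algebraMap LL MM) (AdjoinRoot.root gL)
        (q.map Polynomial.toLaurent) := (Polynomial.eval₂_map _ _ _).symm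
    _ = Polynomial.aeval (AdjoinRoot.root gL) (q.map Polynomial.toLaurent) :=
        (Polynomial.aeval_def _ _).symm
    _ = AdjoinRoot.mk gL (q.map Polynomial.toLaurent) := AdjoinRoot.aeval_eq _

lemma liftM_injective : Function.Injective liftM := by
  rw [injective_iff_map_eq_zero]
  intro a ha
  obtain ⟨q, rfl⟩ := AdjoinRoot.mk_surjective a
  rw [liftM_mk, AdjoinRoot.mk_eq_zero] at ha
  rw [AdjoinRoot.mk_eq_zero]
  have hmod := Polynomial.modByMonic_add_div q fP
  have hdvd2 : gL ∣ (q %ₘ fP).map Polynomial.toLaurent := by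
    have hq : (q %ₘ fP).map Polynomial.toLaurent
        = q.map Polynomial.toLaurent - gL * ((q /ₘ fP).map Polynomial.toLaurent) := by
      rw [gL, ← Polynomial.map_mul, ← Polynomial.map_sub]
      congr 1
      linear_combination hmod
    rw [hq]
    exact dvd_sub ha (Dvd.intro _ rfl)
  have hz : (q %ₘ fP).map Polynomial.toLaurent = 0 := by
    by_contra hne
    obtain ⟨c, hc⟩ := hdvd2
    have hcne : c ≠ 0 := by
      rintro rfl
      rw [mul_zero] at hc
      exact hne hc
    have hge : gL.degree ≤ ((q %ₘ fP).map Polynomial.toLaurent).degree := by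
      rw [hc, mul_comm (G := Polynomial LL), gL_monic.degree_mul]
      exact le_add_of_nonneg_left (Polynomial.zero_le_degree_iff.mpr hcne)
    have hlt : ((q %ₘ fP).map Polynomial.toLaurent).degree < gL.degree := by
      refine lt_of_le_of_lt (Polynomial.degree_map_le (f := Polynomial.toLaurent) (p := q %ₘ fP)) ?_
      rw [gL, fP_monic.degree_map]
      exact Polynomial.degree_modByMonic_lt q fP_monic
    exact absurd hge (not_le_of_gt hlt)
  have hz2 : q %ₘ fP = 0 :=
    Polynomial.map_injective _ Polynomial.toLaurent_injective
      (by rw [hz, Polynomial.map_zero])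
  exact ⟨q /ₘ fP, by conv_lhs => rw [← hmod, hz2, zero_add]⟩

lemma ψ_injective : Function.Injective ψ :=
  fun x y h => eQ.injective (liftM_injective h)

instance isLocAwayMM : IsLocalization.Away (Ideal.Quotient.mk relIdeal vS) MM := by
  refine ⟨?_, ?_, ?_⟩
  · rintro ⟨y, m, rfl⟩
    have hT : IsUnit (algebraMap LL MM (T 1)) := (isUnit_T (1 : ℤ)).map _
    show IsUnit (algebraMap QuotA MM (Ideal.Quotient.mk relIdeal vS ^ m))
    rw [algebraMap_QuotA_MM, map_pow, ψ_v]
    exact hT.pow m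
  · intro z
    obtain ⟨q, rfl⟩ := AdjoinRoot.mk_surjective z
    obtain ⟨n, p, hp⟩ := clear_denom q
    refine ⟨⟨eQ.symm (AdjoinRoot.mk fP p),
      ⟨Ideal.Quotient.mk relIdeal vS ^ n, ⟨n, rfl⟩⟩⟩, ?_⟩
    show AdjoinRoot.mk gL q * algebraMap QuotA MM (Ideal.Quotient.mk relIdeal vS ^ n)
      = algebraMap QuotA MM (eQ.symm (AdjoinRoot.mk fP p))
    rw [algebraMap_QuotA_MM, map_pow, ψ_v, ψ_symm_mk, hp, map_mul]
    congr 1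
    have h1 : (Polynomial.C (T (n : ℤ)) : Polynomial LL) = Polynomial.C (T 1) ^ n := by
      rw [← Polynomial.C_pow, T_pow]
      norm_num
    rw [h1, map_pow]
    rfl
  · intro x y h
    rw [algebraMap_QuotA_MM] at h
    exact ⟨1, by rw [ψ_injective h]⟩

end LocFreeAux

namespace LocFreeAux
open LaurentPolynomial

def bL : Module.Basis ℤ CoeffR LL := Module.Basis.ofRepr (AddMonoidAlgebra.coeffLinearEquiv CoeffR)

lemma bL_apply (j : ℤ) : bL j = T j := by
  rw [bL, Module.Basis.coe_ofRepr]
  rfl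

def pbM : PowerBasis LL MM := AdjoinRoot.powerBasis' gL_monic

lemma pbM_dim : pbM.dim = 2 := by
  show gL.natDegree = 2
  exact gL_natDegree

def bM : Module.Basis (ℤ × Fin 2) CoeffR MM :=
  bL.smulTower (pbM.basis.reindex (finCongr pbM_dim))

lemma bM_apply (j : ℤ) (i : Fin 2) :
    bM (j, i) = algebraMap LL MM (T j) * AdjoinRoot.root gL ^ (i : ℕ) := by
  rw [bM, Module.Basis.smulTower_apply, Module.Basis.reindex_apply, PowerBasis.basis_eq_pow,
    show pbM.gen = AdjoinRoot.root gL from AdjoinRoot.powerBasis'_gen gL_monic,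
    bL_apply, Algebra.smul_def]
  simp

def TU (j : ℤ) : LLˣ :=
  ⟨T j, T (-j), by rw [← T_add]; simp, by rw [← T_add]; simp⟩

lemma TU_mul (a b : ℤ) : TU a * TU b = TU (a + b) :=
  Units.ext (by rw [Units.val_mul]; exact (T_add a b).symm)

lemma TU_zero : TU 0 = 1 := Units.ext T_zero

lemma TU_one_zpow (j : ℤ) : TU 1 ^ j = TU j := by
  induction j using Int.induction_on with
  | zero => rw [zpow_zero, TU_zero]
  | succ k ih =>
    rw [zpow_add_one, ih, TU_mul]
  | pred k ih =>
    rw [zpow_sub_one, ih]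
    have hinv : (TU 1)⁻¹ = TU (-1) := by
      apply inv_eq_of_mul_eq_one_right
      rw [TU_mul]
      have h : (1 : ℤ) + -1 = 0 := by norm_num
      rw [h, TU_zero]
    rw [hinv, TU_mul]
    exact congrArg TU (by ring)

lemma coe_uM_zpow (j : ℤ) :
    (((Units.map (algebraMap LL MM).toMonoidHom (TU 1)) ^ j : MMˣ) : MM)
      = algebraMap LL MM (T j) := by
  rw [← map_zpow, TU_one_zpow, Units.coe_map]
  rfl

end LocFreeAux


open LocFreeAux LaurentPolynomial

/-- `B = R[u,v,v⁻¹]/(u² + ρu + τv)`, i.e. the localization at `v` of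
`A = R[u,v]/(u² + ρu + τv)`, is a free `R`-module with basis the images of the monomials
`v^j` and `u·v^j`, `j ∈ ℤ`. -/
theorem localization_free_with_basis
    (B : Type) [CommRing B] [Algebra QuotA B] [Algebra CoeffR B]
    [IsScalarTower CoeffR QuotA B]
    [IsLocalization.Away (Ideal.Quotient.mk relIdeal vS) B]
    (vu : Bˣ) (hvu : (vu : B) = @algebraMap QuotA B inferInstance inferInstance _ (Ideal.Quotient.mk relIdeal vS)) :
    Module.Free CoeffR B ∧
    LinearIndependent CoeffR (laurentFam B vu) ∧
    Submodule.span CoeffR (Set.range (laurentFam B vu)) = ⊤ := by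
  
  classical
  let ε : B ≃ₐ[QuotA] MM :=
    IsLocalization.algEquiv (Submonoid.powers (Ideal.Quotient.mk relIdeal vS)) B MM
  let ε' : B ≃ₐ[CoeffR] MM := AlgEquiv.restrictScalars CoeffR ε
  let bB : Module.Basis (ℤ × Fin 2) CoeffR B := bM.map ε'.symm.toLinearEquiv
  let σ : ℤ ⊕ ℤ → ℤ × Fin 2 := Sum.elim (fun j => (j, 0)) (fun j => (j, 1))
  have hσinj : Function.Injective σ := by
    rintro (a | a) (b | b) h <;> simp [σ] at h <;> simp [h]
  have hσsurj : Function.Surjective σ := by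
    rintro ⟨j, i⟩
    fin_cases i
    · exact ⟨Sum.inl j, rfl⟩
    · exact ⟨Sum.inr j, rfl⟩
  -- the image of vu^j under ε
  have hεv : ∀ j : ℤ, ε ((vu ^ j : Bˣ) : B) = algebraMap LL MM (T j) := by
    intro j
    let εm : B →* MM := (ε : B ≃* MM).toMonoidHom
    have hw : Units.map εm vu = Units.map (algebraMap LL MM).toMonoidHom (TU 1) := by
      apply Units.ext
      rw [Units.coe_map, Units.coe_map]
      show ε (vu : B) = algebraMap LL MM ((TU 1 : LLˣ) : LL)
      rw [hvu, AlgEquiv.commutes, algebraMap_QuotA_MM, ψ_v]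
      rfl
    have h1 : ε ((vu ^ j : Bˣ) : B) = ((Units.map εm (vu ^ j) : MMˣ) : MM) := by
      rw [Units.coe_map]
      rfl
    rw [h1, map_zpow, hw, coe_uM_zpow]
  have key : ∀ s : ℤ ⊕ ℤ, ε' (laurentFam B vu s) = bM (σ s) := by
    rintro (j | j)
    · show ε ((vu ^ j : Bˣ) : B) = bM (j, 0)
      rw [hεv, bM_apply]
      simp
    · show ε (algebraMap QuotA B (Ideal.Quotient.mk relIdeal uS) * ((vu ^ j : Bˣ) : B))
        = bM (j, 1)
      rw [map_mul, AlgEquiv.commutes, algebraMap_QuotA_MM, ψ_u, hεv, bM_apply]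
      simp [mul_comm]
  have key2 : ∀ s : ℤ ⊕ ℤ, laurentFam B vu s = bB (σ s) := by
    intro s
    rw [show bB (σ s) = ε'.symm.toLinearEquiv (bM (σ s)) from Module.Basis.map_apply _ _ _,
      ← key s]
    exact (ε'.symm_apply_apply _).symm
  have hfam : laurentFam B vu = fun s => bB (σ s) := funext key2
  refine ⟨Module.Free.of_basis bB, ?_, ?_⟩
  · rw [hfam]
    exact bB.linearIndependent.comp σ hσinj
  · rw [hfam]
    have hr : Set.range (fun s => bB (σ s)) = Set.range bB := by
      rw [show (fun s => bB (σ s)) = bB ∘ σ from rfl]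
      exact hσsurj.range_comp bB
    rw [hr]
    exact bB.span_eq
end
end
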